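/- Let P be a finite poset of distributive type with the property that every pair of elements of P has at most one minimal upper bound, let K be a field, and let L' = [a, b] be an interval of P (which is a distributive lattice under the induced order). Let S' = K[{x_α : α ∈ L'}] be embedded in K[P] = K[{x_α : α ∈ P}] in the obvious way. Then J_P ∩ S' = J_{L'}, where J_{L'} is the ideal of S' generated by the join-meet binomials x_α x_β − x_{α∨β} x_{α∧β} for α, β ∈ L' (joins and meets taken in the lattice L'). -/
import Mathlib


open MvPolynomial

/-- The partial order on `β` underlies a distributive lattice. -/
def IsDistribOrder (β : Type*) [inst : PartialOrder β] : Prop :=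
  ∃ L : DistribLattice β, L.toLattice.toSemilatticeSup.toPartialOrder = inst

/-- A finite poset with a least element is of *distributive type* if every interval
`[⊥, a]`, with the induced order, is a distributive lattice. -/
def DistribType (P : Type*) [PartialOrder P] [Fintype P] [OrderBot P] : Prop :=
  ∀ a : P, IsDistribOrder (Set.Icc (⊥ : P) a)

/-- `γ` is a minimal upper bound of `α` and `β`. -/
def IsMinUB {P : Type*} [PartialOrder P] (α β γ : P) : Prop :=
  α ≤ γ ∧ β ≤ γ ∧ ∀ δ : P, α ≤ δ → β ≤ δ → δ ≤ γ → δ = γ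

open scoped Classical in
/-- The ideal `J_P` of `K[P]` generated by the polynomials `f_{α,β}`:
if `α, β` have no common upper bound, `f_{α,β} = x_α x_β`; otherwise
`f_{α,β} = x_α x_β − x_{α∧β} (Σ_γ x_γ)`, where `α∧β` is the greatest lower bound of
`α` and `β` in `P` and `γ` ranges over all minimal upper bounds of `α` and `β`. -/
noncomputable def posetIdeal (K : Type*) [Field K] (P : Type*) [PartialOrder P]
    [Fintype P] : Ideal (MvPolynomial P K) :=
  Ideal.span { f | ∃ α β : P,
    ((¬ ∃ c : P, α ≤ c ∧ β ≤ c) ∧ f = X α * X β) ∨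
    ((∃ c : P, α ≤ c ∧ β ≤ c) ∧ ∃ m : P, IsGLB {α, β} m ∧
      f = X α * X β - X m *
        ∑ γ ∈ Finset.univ.filter (fun γ : P => IsMinUB α β γ), X γ) }

/-- Let `P` be a finite poset of distributive type in which every pair of elements has at
most one minimal upper bound, `K` a field, and `L' = [a, b]` an interval of `P`.  Embedding
`S' = K[{x_α : α ∈ L'}]` into `K[P]` by renaming variables along the inclusion, one has
`J_P ∩ S' = J_{L'}`, where `J_{L'}` is generated by the join-meet binomials
`x_α x_β − x_{α∨β} x_{α∧β}` (`α, β ∈ L'`, joins and meets taken in the lattice `L'`). -/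
theorem statement7 {P : Type*} [PartialOrder P] [Fintype P] [OrderBot P]
    (K : Type*) [Field K] (hP : DistribType P)
    (huniq : ∀ α β γ δ : P, IsMinUB α β γ → IsMinUB α β δ → γ = δ)
    (a b : P) (hab : a ≤ b) :
    Ideal.comap (MvPolynomial.rename
        (Subtype.val : Set.Icc a b → P)).toRingHom (posetIdeal K P) =
      Ideal.span { f : MvPolynomial (Set.Icc a b) K |
        ∃ α β s i : Set.Icc a b, IsLUB {α, β} s ∧ IsGLB {α, β} i ∧
          f = X α * X β - X s * X i } := by
  classical
  obtain ⟨L, hL⟩ := hP b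
  letI instL : DistribLattice (Set.Icc (⊥ : P) b) := L
  have hle : ∀ x y : Set.Icc (⊥ : P) b,
      L.toLattice.toSemilatticeSup.toPartialOrder.le x y ↔ x.1 ≤ y.1 := by
    intro x y; rw [hL]; exact Iff.rfl
  have memQ : ∀ {γ : P}, γ ≤ b → γ ∈ Set.Icc (⊥ : P) b :=
    fun h => Set.mem_Icc.mpr ⟨bot_le, h⟩
  -- minimal upper bounds and glbs in `P` from the lattice on `[⊥, b]`
  have hminub : ∀ x y : Set.Icc (⊥ : P) b, IsMinUB x.1 y.1 (x ⊔ y).1 := by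
    intro x y
    refine ⟨(hle _ _).1 le_sup_left, (hle _ _).1 le_sup_right, fun δ h1 h2 h3 => ?_⟩
    have hδb : δ ≤ b := h3.trans (x ⊔ y).2.2
    exact le_antisymm h3 ((hle _ _).1
      (sup_le ((hle x ⟨δ, memQ hδb⟩).2 h1) ((hle y ⟨δ, memQ hδb⟩).2 h2)))
  have hglb : ∀ x y : Set.Icc (⊥ : P) b, IsGLB {x.1, y.1} (x ⊓ y).1 := by
    intro x y
    constructor
    · rintro z hz
      simp only [Set.mem_insert_iff, Set.mem_singleton_iff] at hz
      rcases hz with rfl | rfl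
      · exact (hle _ _).1 inf_le_left
      · exact (hle _ _).1 inf_le_right
    · intro δ hδ
      have h1 : δ ≤ x.1 := hδ (Set.mem_insert _ _)
      have h2 : δ ≤ y.1 := hδ (Set.mem_insert_of_mem _ rfl)
      have hδb : δ ≤ b := le_trans h1 x.2.2
      exact (hle _ _).1
        (le_inf ((hle ⟨δ, memQ hδb⟩ x).2 h1) ((hle ⟨δ, memQ hδb⟩ y).2 h2))
  have hfilter : ∀ x y : Set.Icc (⊥ : P) b,
      (Finset.univ.filter fun γ : P => IsMinUB x.1 y.1 γ) = {(x ⊔ y).1} := by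
    intro x y
    ext γ
    simp only [Finset.mem_filter, Finset.mem_univ, true_and, Finset.mem_singleton]
    exact ⟨fun h => huniq _ _ _ _ h (hminub x y), fun h => h ▸ hminub x y⟩
  -- the retraction
  set ea : Set.Icc (⊥ : P) b := ⟨a, memQ hab⟩ with hea
  set σ : Set.Icc (⊥ : P) b → Set.Icc a b := fun x =>
    ⟨(x ⊔ ea).1, Set.mem_Icc.mpr ⟨(hle ea (x ⊔ ea)).1 le_sup_right, (x ⊔ ea).2.2⟩⟩
    with hσ
  set vfun : P → MvPolynomial (Set.Icc a b) K := fun γ =>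
    if h : γ ≤ b then X (σ ⟨γ, memQ h⟩) else 0 with hvfun
  have hv1 : ∀ (γ : P) (h : γ ≤ b), vfun γ = X (σ ⟨γ, memQ h⟩) := by
    intro γ h; rw [hvfun]; exact dif_pos h
  have hv0 : ∀ (γ : P), ¬ γ ≤ b → vfun γ = 0 := by
    intro γ h; rw [hvfun]; exact dif_neg h
  have hsupdist : ∀ x y : Set.Icc (⊥ : P) b, (x ⊔ ea) ⊔ (y ⊔ ea) = (x ⊔ y) ⊔ ea := by
    intro x y; rw [sup_sup_sup_comm, sup_idem]
  have hinfdist : ∀ x y : Set.Icc (⊥ : P) b, (x ⊔ ea) ⊓ (y ⊔ ea) = (x ⊓ y) ⊔ ea := by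
    intro x y; rw [sup_inf_right]
  have hlub' : ∀ x y : Set.Icc (⊥ : P) b, IsLUB {σ x, σ y} (σ (x ⊔ y)) := by
    intro x y
    constructor
    · rintro z hz
      simp only [Set.mem_insert_iff, Set.mem_singleton_iff] at hz
      rcases hz with rfl | rfl
      · exact (hle _ _).1 (sup_le_sup_right le_sup_left ea)
      · exact (hle _ _).1 (sup_le_sup_right le_sup_right ea)
    · intro δ hδ
      have h1 : (σ x).1 ≤ δ.1 := hδ (Set.mem_insert _ _)
      have h2 : (σ y).1 ≤ δ.1 := hδ (Set.mem_insert_of_mem _ rfl)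
      have key := sup_le ((hle (x ⊔ ea) ⟨δ.1, memQ δ.2.2⟩).2 h1)
        ((hle (y ⊔ ea) ⟨δ.1, memQ δ.2.2⟩).2 h2)
      rw [hsupdist x y] at key
      exact (hle _ _).1 key
  have hglb' : ∀ x y : Set.Icc (⊥ : P) b, IsGLB {σ x, σ y} (σ (x ⊓ y)) := by
    intro x y
    constructor
    · rintro z hz
      simp only [Set.mem_insert_iff, Set.mem_singleton_iff] at hz
      rcases hz with rfl | rfl
      · exact (hle _ _).1 (sup_le_sup_right inf_le_left ea)
      · exact (hle _ _).1 (sup_le_sup_right inf_le_right ea)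
    · intro δ hδ
      have h1 : δ.1 ≤ (σ x).1 := hδ (Set.mem_insert _ _)
      have h2 : δ.1 ≤ (σ y).1 := hδ (Set.mem_insert_of_mem _ rfl)
      have key := le_inf ((hle ⟨δ.1, memQ δ.2.2⟩ (x ⊔ ea)).2 h1)
        ((hle ⟨δ.1, memQ δ.2.2⟩ (y ⊔ ea)).2 h2)
      rw [hinfdist x y] at key
      exact (hle _ _).1 key
  have hcan : ∀ z : Set.Icc (⊥ : P) b,
      (⟨z.1, memQ z.2.2⟩ : Set.Icc (⊥ : P) b) = z := fun z => Subtype.ext rfl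
  have haev : ∀ f : MvPolynomial (Set.Icc a b) K,
      aeval vfun (rename (Subtype.val : Set.Icc a b → P) f) = f := by
    intro f
    rw [aeval_rename]
    have hfn : (vfun ∘ (Subtype.val : Set.Icc a b → P)) = X := by
      funext q
      have hq : q.1 ≤ b := q.2.2
      show vfun q.1 = X q
      rw [hv1 q.1 hq]
      congr 1
      apply Subtype.ext
      show ((⟨q.1, memQ hq⟩ : Set.Icc (⊥ : P) b) ⊔ ea).1 = q.1
      rw [sup_eq_left.mpr ((hle ea ⟨q.1, memQ hq⟩).2 q.2.1)]
    rw [hfn, aeval_X_left_apply]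
  refine le_antisymm ?_ ?_
  · -- J_P ∩ S' ⊆ J_{L'} via the retraction
    intro f hf
    rw [Ideal.mem_comap] at hf
    have h1 : aeval vfun ((rename (Subtype.val : Set.Icc a b → P)) f) ∈
        Ideal.map (aeval vfun :
          MvPolynomial P K →ₐ[K] MvPolynomial (Set.Icc a b) K) (posetIdeal K P) :=
      Ideal.mem_map_of_mem _ hf
    unfold posetIdeal at h1
    rw [Ideal.map_span] at h1
    have hsub : (aeval vfun :
          MvPolynomial P K →ₐ[K] MvPolynomial (Set.Icc a b) K) '' { f | ∃ α β : P,
        ((¬ ∃ c : P, α ≤ c ∧ β ≤ c) ∧ f = X α * X β) ∨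
        ((∃ c : P, α ≤ c ∧ β ≤ c) ∧ ∃ m : P, IsGLB {α, β} m ∧
          f = X α * X β - X m *
            ∑ γ ∈ Finset.univ.filter (fun γ : P => IsMinUB α β γ), X γ) } ⊆
        ↑(Ideal.span { f : MvPolynomial (Set.Icc a b) K |
          ∃ α β s i : Set.Icc a b, IsLUB {α, β} s ∧ IsGLB {α, β} i ∧
            f = X α * X β - X s * X i }) := by
      rintro g ⟨g0, ⟨α, β, hcase⟩, rfl⟩
      rw [SetLike.mem_coe]
      rcases hcase with ⟨hnc, rfl⟩ | ⟨⟨c, hc1, hc2⟩, m, hm, rfl⟩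
      · -- no common upper bound
        have hnab : ¬ (α ≤ b ∧ β ≤ b) := fun h => hnc ⟨b, h.1, h.2⟩
        rw [map_mul, aeval_X, aeval_X]
        rcases not_and_or.mp hnab with h | h
        · rw [hv0 α h, zero_mul]; exact Ideal.zero_mem _
        · rw [hv0 β h, mul_zero]; exact Ideal.zero_mem _
      · rw [map_sub, map_mul, map_mul, map_sum]
        simp only [aeval_X]
        by_cases hab' : α ≤ b ∧ β ≤ b
        · obtain ⟨hα, hβ⟩ := hab'
          have hmeq : m = ((⟨α, memQ hα⟩ : Set.Icc (⊥ : P) b) ⊓ ⟨β, memQ hβ⟩).1 :=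
            hm.unique (hglb ⟨α, memQ hα⟩ ⟨β, memQ hβ⟩)
          rw [show (Finset.univ.filter fun γ : P => IsMinUB α β γ)
              = {((⟨α, memQ hα⟩ : Set.Icc (⊥ : P) b) ⊔ ⟨β, memQ hβ⟩).1} from
              hfilter ⟨α, memQ hα⟩ ⟨β, memQ hβ⟩, Finset.sum_singleton]
          rw [hv1 α hα, hv1 β hβ, hmeq,
            hv1 _ ((⟨α, memQ hα⟩ ⊓ ⟨β, memQ hβ⟩ : Set.Icc (⊥ : P) b)).2.2,
            hv1 _ ((⟨α, memQ hα⟩ ⊔ ⟨β, memQ hβ⟩ : Set.Icc (⊥ : P) b)).2.2,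
            hcan, hcan]
          exact Ideal.subset_span ⟨σ ⟨α, memQ hα⟩, σ ⟨β, memQ hβ⟩,
            σ (⟨α, memQ hα⟩ ⊔ ⟨β, memQ hβ⟩), σ (⟨α, memQ hα⟩ ⊓ ⟨β, memQ hβ⟩),
            hlub' _ _, hglb' _ _, by ring⟩
        · have hz : ∀ γ ∈ Finset.univ.filter (fun γ : P => IsMinUB α β γ), vfun γ = 0 := by
            intro γ hγ
            rw [Finset.mem_filter] at hγ
            refine hv0 γ fun hγb => hab' ?_
            exact ⟨hγ.2.1.trans hγb, hγ.2.2.1.trans hγb⟩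
          rw [Finset.sum_eq_zero hz, mul_zero, sub_zero]
          rcases not_and_or.mp hab' with h | h
          · rw [hv0 α h, zero_mul]; exact Ideal.zero_mem _
          · rw [hv0 β h, mul_zero]; exact Ideal.zero_mem _
    have h2 := Ideal.span_le.mpr hsub h1
    rwa [haev f] at h2
  · -- J_{L'} ⊆ J_P ∩ S'
    rw [Ideal.span_le]
    rintro f ⟨α, β, s, i, hs, hi, rfl⟩
    rw [SetLike.mem_coe, Ideal.mem_comap]
    have hα : α.1 ≤ b := α.2.2
    have hβ : β.1 ≤ b := β.2.2
    have hjmem : ((⟨α.1, memQ hα⟩ ⊔ ⟨β.1, memQ hβ⟩ : Set.Icc (⊥ : P) b)).1 ∈ Set.Icc a b :=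
      Set.mem_Icc.mpr ⟨le_trans α.2.1 ((hle (⟨α.1, memQ hα⟩ : Set.Icc (⊥ : P) b)
        (⟨α.1, memQ hα⟩ ⊔ ⟨β.1, memQ hβ⟩)).1 le_sup_left),
        ((⟨α.1, memQ hα⟩ ⊔ ⟨β.1, memQ hβ⟩ : Set.Icc (⊥ : P) b)).2.2⟩
    have himem : ((⟨α.1, memQ hα⟩ ⊓ ⟨β.1, memQ hβ⟩ : Set.Icc (⊥ : P) b)).1 ∈ Set.Icc a b :=
      Set.mem_Icc.mpr ⟨(hle _ _).1 (le_inf ((hle ea ⟨α.1, memQ hα⟩).2 α.2.1)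
        ((hle ea ⟨β.1, memQ hβ⟩).2 β.2.1)),
        ((⟨α.1, memQ hα⟩ ⊓ ⟨β.1, memQ hβ⟩ : Set.Icc (⊥ : P) b)).2.2⟩
    have hual : α.1 ≤ ((⟨α.1, memQ hα⟩ ⊔ ⟨β.1, memQ hβ⟩ : Set.Icc (⊥ : P) b)).1 :=
      (hle (⟨α.1, memQ hα⟩ : Set.Icc (⊥ : P) b)
        (⟨α.1, memQ hα⟩ ⊔ ⟨β.1, memQ hβ⟩)).1 le_sup_left
    have hubl : β.1 ≤ ((⟨α.1, memQ hα⟩ ⊔ ⟨β.1, memQ hβ⟩ : Set.Icc (⊥ : P) b)).1 :=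
      (hle (⟨β.1, memQ hβ⟩ : Set.Icc (⊥ : P) b)
        (⟨α.1, memQ hα⟩ ⊔ ⟨β.1, memQ hβ⟩)).1 le_sup_right
    have hial : ((⟨α.1, memQ hα⟩ ⊓ ⟨β.1, memQ hβ⟩ : Set.Icc (⊥ : P) b)).1 ≤ α.1 :=
      (hle ((⟨α.1, memQ hα⟩ : Set.Icc (⊥ : P) b) ⊓ ⟨β.1, memQ hβ⟩)
        (⟨α.1, memQ hα⟩ : Set.Icc (⊥ : P) b)).1 inf_le_left
    have hibl : ((⟨α.1, memQ hα⟩ ⊓ ⟨β.1, memQ hβ⟩ : Set.Icc (⊥ : P) b)).1 ≤ β.1 :=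
      (hle ((⟨α.1, memQ hα⟩ : Set.Icc (⊥ : P) b) ⊓ ⟨β.1, memQ hβ⟩)
        (⟨β.1, memQ hβ⟩ : Set.Icc (⊥ : P) b)).1 inf_le_right
    have hlubj : IsLUB ({α, β} : Set (Set.Icc a b))
        ⟨((⟨α.1, memQ hα⟩ ⊔ ⟨β.1, memQ hβ⟩ : Set.Icc (⊥ : P) b)).1, hjmem⟩ := by
      constructor
      · rintro z hz
        simp only [Set.mem_insert_iff, Set.mem_singleton_iff] at hz
        rcases hz with rfl | rfl
        · exact hual
        · exact hubl
      · intro δ hδ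
        have h1 : α.1 ≤ δ.1 := hδ (Set.mem_insert _ _)
        have h2 : β.1 ≤ δ.1 := hδ (Set.mem_insert_of_mem _ rfl)
        exact (hle _ _).1 (sup_le ((hle ⟨α.1, memQ hα⟩ ⟨δ.1, memQ δ.2.2⟩).2 h1)
          ((hle ⟨β.1, memQ hβ⟩ ⟨δ.1, memQ δ.2.2⟩).2 h2))
    have hglbi : IsGLB ({α, β} : Set (Set.Icc a b))
        ⟨((⟨α.1, memQ hα⟩ ⊓ ⟨β.1, memQ hβ⟩ : Set.Icc (⊥ : P) b)).1, himem⟩ := by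
      constructor
      · rintro z hz
        simp only [Set.mem_insert_iff, Set.mem_singleton_iff] at hz
        rcases hz with rfl | rfl
        · exact hial
        · exact hibl
      · intro δ hδ
        have h1 : δ.1 ≤ α.1 := hδ (Set.mem_insert _ _)
        have h2 : δ.1 ≤ β.1 := hδ (Set.mem_insert_of_mem _ rfl)
        exact (hle _ _).1 (le_inf ((hle ⟨δ.1, memQ δ.2.2⟩ ⟨α.1, memQ hα⟩).2 h1)
          ((hle ⟨δ.1, memQ δ.2.2⟩ ⟨β.1, memQ hβ⟩).2 h2))
    have hseq : s.1 = ((⟨α.1, memQ hα⟩ ⊔ ⟨β.1, memQ hβ⟩ : Set.Icc (⊥ : P) b)).1 :=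
      congrArg Subtype.val (hs.unique hlubj)
    have hieq : i.1 = ((⟨α.1, memQ hα⟩ ⊓ ⟨β.1, memQ hβ⟩ : Set.Icc (⊥ : P) b)).1 :=
      congrArg Subtype.val (hi.unique hglbi)
    refine Ideal.subset_span ⟨α.1, β.1, Or.inr ⟨⟨b, hα, hβ⟩,
      ((⟨α.1, memQ hα⟩ ⊓ ⟨β.1, memQ hβ⟩ : Set.Icc (⊥ : P) b)).1,
      hglb ⟨α.1, memQ hα⟩ ⟨β.1, memQ hβ⟩, ?_⟩⟩
    simp only [AlgHom.toRingHom_eq_coe, RingHom.coe_coe, map_sub, map_mul, rename_X]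
    rw [show (Finset.univ.filter fun γ : P => IsMinUB α.1 β.1 γ)
        = {((⟨α.1, memQ hα⟩ ⊔ ⟨β.1, memQ hβ⟩ : Set.Icc (⊥ : P) b)).1} from
        hfilter ⟨α.1, memQ hα⟩ ⟨β.1, memQ hβ⟩, Finset.sum_singleton]
    rw [hseq, hieq]
    ring
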